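/- Let H be an N-dimensional real inner product space with basis (φ_i). Suppose there are constants 0 < m ≤ M such that for all coefficient vectors x ∈ ℝ^N, m ‖x‖²_{ℝ^N} ≤ ‖∑ x_i φ_i‖²_H ≤ M ‖x‖²_{ℝ^N}. Let B : H × H → ℝ be a symmetric bilinear form with c ‖v‖²_H ≤ B(v,v) ≤ C ‖v‖²_H for all v ∈ H, where 0 < c ≤ C. Let Ŝ ∈ ℝ^{N×N} be the matrix with (Ŝ x, y) = B(∑ x_i φ_i, ∑ y_i φ_i). Then Ŝ is symmetric positive definite and its condition number satisfies κ(Ŝ) ≤ (C M)/(c m). -/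

import Mathlib

open Matrix

/-!
The coefficient map `x ↦ ∑ xᵢ φᵢ` transports the two-sided bounds: `Ŝ x ⬝ x = B(v, v)` for
`v = ∑ xᵢ φᵢ`, so the ellipticity bounds of `B` in the `H`-norm chained with the mass-matrix
equivalence give `c m |x|² ≤ Ŝ x ⬝ x ≤ C M |x|²`. Evaluating this Rayleigh-quotient estimate at
eigenvectors confines the spectrum of `Ŝ` to `[c m, C M]`, and symmetry of `Ŝ` is inherited
from that of `B`.
-/

namespace Matrix

variable {ι R : Type*} [Fintype ι]

theorem dotProduct_self_eq_sum_sq [CommSemiring R] (x : ι → R) : x ⬝ᵥ x = ∑ i, x i ^ 2 := by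
  simp only [dotProduct, sq]

theorem dotProduct_self_pos [Ring R] [LinearOrder R] [IsStrictOrderedRing R] {x : ι → R}
    (hx : x ≠ 0) : 0 < x ⬝ᵥ x :=
  (Finset.sum_nonneg fun i _ => mul_self_nonneg (x i)).lt_of_ne'
    (dotProduct_self_eq_zero.not.mpr hx)

theorem isSymm_of_mulVec_dotProduct_comm [CommSemiring R] [DecidableEq ι]
    {S : Matrix ι ι R} (h : ∀ x y, S *ᵥ x ⬝ᵥ y = S *ᵥ y ⬝ᵥ x) : S.IsSymm :=
  IsSymm.ext fun i j => by
    simpa [mulVec_single_one, dotProduct_single_one] using (h (Pi.single j 1) (Pi.single i 1)).symm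

section Eigenvalue

variable [DecidableEq ι] {S : Matrix ι ι R} {μ : R}

theorem mulVec_dotProduct_self_of_hasEigenvalue [CommRing R]
    (hμ : Module.End.HasEigenvalue (toLin' S) μ) :
    ∃ x ≠ 0, S *ᵥ x ⬝ᵥ x = μ * (x ⬝ᵥ x) := by
  obtain ⟨x, hx⟩ := hμ.exists_hasEigenvector
  have hSx : S *ᵥ x = μ • x := by simpa only [toLin'_apply] using hx.apply_eq_smul
  exact ⟨x, hx.2, by rw [hSx, smul_dotProduct, smul_eq_mul]⟩

variable [Field R] [LinearOrder R] [IsStrictOrderedRing R]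

theorem le_eigenvalue_of_le_mulVec_dotProduct_self {a : R}
    (h : ∀ x, a * (x ⬝ᵥ x) ≤ S *ᵥ x ⬝ᵥ x)
    (hμ : Module.End.HasEigenvalue (toLin' S) μ) : a ≤ μ := by
  obtain ⟨x, hx, hSx⟩ := mulVec_dotProduct_self_of_hasEigenvalue hμ
  exact le_of_mul_le_mul_right (hSx ▸ h x) (dotProduct_self_pos hx)

theorem eigenvalue_le_of_mulVec_dotProduct_self_le {b : R}
    (h : ∀ x, S *ᵥ x ⬝ᵥ x ≤ b * (x ⬝ᵥ x))
    (hμ : Module.End.HasEigenvalue (toLin' S) μ) : μ ≤ b := by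
  obtain ⟨x, hx, hSx⟩ := mulVec_dotProduct_self_of_hasEigenvalue hμ
  exact le_of_mul_le_mul_right (hSx ▸ h x) (dotProduct_self_pos hx)

end Eigenvalue

section Stiffness

variable {H : Type*} [SeminormedAddCommGroup H] [Module ℝ H]

def IsStiffnessMatrix (S : Matrix ι ι ℝ) (B : LinearMap.BilinForm ℝ H) (φ : ι → H) : Prop :=
  ∀ x y : ι → ℝ, S *ᵥ x ⬝ᵥ y = B (∑ i, x i • φ i) (∑ i, y i • φ i)

variable {S : Matrix ι ι ℝ} {B : LinearMap.BilinForm ℝ H} {φ : ι → H}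

theorem IsStiffnessMatrix.isSymm [DecidableEq ι] (hS : IsStiffnessMatrix S B φ)
    (hB : ∀ v w, B v w = B w v) : S.IsSymm :=
  isSymm_of_mulVec_dotProduct_comm fun x y => by rw [hS, hS, hB]

theorem IsStiffnessMatrix.mul_dotProduct_self_le (hS : IsStiffnessMatrix S B φ) {c m : ℝ}
    (hc : 0 ≤ c) (hφ : ∀ x : ι → ℝ, m * ∑ i, x i ^ 2 ≤ ‖∑ i, x i • φ i‖ ^ 2)
    (hB : ∀ v, c * ‖v‖ ^ 2 ≤ B v v) (x : ι → ℝ) :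
    c * m * (x ⬝ᵥ x) ≤ S *ᵥ x ⬝ᵥ x := by
  rw [hS, dotProduct_self_eq_sum_sq, mul_assoc]
  exact (mul_le_mul_of_nonneg_left (hφ x) hc).trans (hB _)

theorem IsStiffnessMatrix.dotProduct_self_le_mul (hS : IsStiffnessMatrix S B φ) {C M : ℝ}
    (hC : 0 ≤ C) (hφ : ∀ x : ι → ℝ, ‖∑ i, x i • φ i‖ ^ 2 ≤ M * ∑ i, x i ^ 2)
    (hB : ∀ v, B v v ≤ C * ‖v‖ ^ 2) (x : ι → ℝ) :
    S *ᵥ x ⬝ᵥ x ≤ C * M * (x ⬝ᵥ x) := by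
  rw [hS, dotProduct_self_eq_sum_sq, mul_assoc]
  exact (hB _).trans (mul_le_mul_of_nonneg_left (hφ x) hC)

end Stiffness

end Matrix

theorem stmt_11_general {H : Type*} [NormedAddCommGroup H] [InnerProductSpace ℝ H]
    (N : ℕ) (φ : Module.Basis (Fin N) ℝ H)
    (m M : ℝ) (hm : 0 < m) (hmM : m ≤ M)
    (hequiv : ∀ x : Fin N → ℝ,
      m * ∑ i, x i ^ 2 ≤ ‖∑ i, x i • φ i‖ ^ 2 ∧
        ‖∑ i, x i • φ i‖ ^ 2 ≤ M * ∑ i, x i ^ 2)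
    (B : LinearMap.BilinForm ℝ H) (hBsym : ∀ v w : H, B v w = B w v)
    (c C : ℝ) (hc : 0 < c) (hcC : c ≤ C)
    (hB : ∀ v : H, c * ‖v‖ ^ 2 ≤ B v v ∧ B v v ≤ C * ‖v‖ ^ 2)
    (S : Matrix (Fin N) (Fin N) ℝ)
    (hS : ∀ x y : Fin N → ℝ,
      S.mulVec x ⬝ᵥ y = B (∑ i, x i • φ i) (∑ i, y i • φ i))
    (lmax lmin : ℝ)
    (hmax : Module.End.HasEigenvalue (Matrix.toLin' S) lmax)
    (hmin : Module.End.HasEigenvalue (Matrix.toLin' S) lmin) :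
    S.IsSymm ∧ (∀ x : Fin N → ℝ, x ≠ 0 → 0 < S.mulVec x ⬝ᵥ x) ∧
      lmax / lmin ≤ (C * M) / (c * m) := by
  have hS : IsStiffnessMatrix S B φ := hS
  have hcm : 0 < c * m := mul_pos hc hm
  have hCM : 0 ≤ C * M := mul_nonneg (hc.le.trans hcC) (hm.le.trans hmM)
  have hlower := hS.mul_dotProduct_self_le hc.le (fun x => (hequiv x).1) (fun v => (hB v).1)
  have hupper := hS.dotProduct_self_le_mul (hc.le.trans hcC) (fun x => (hequiv x).2)
    (fun v => (hB v).2)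
  refine ⟨hS.isSymm hBsym, fun x hx => ?_, ?_⟩
  · exact (mul_pos hcm (dotProduct_self_pos hx)).trans_le (hlower x)
  · exact div_le_div₀ hCM (eigenvalue_le_of_mulVec_dotProduct_self_le hupper hmax) hcm
      (le_eigenvalue_of_le_mulVec_dotProduct_self hlower hmin)

/-- Abstract condition number estimate for the Schur complement stiffness
matrix: mass-matrix-type norm equivalence together with two-sided bounds on the
bilinear form imply `Ŝ` is symmetric positive definite with condition number
`κ(Ŝ) ≤ C M / (c m)`. -/
theorem stmt_11 {H : Type*} [NormedAddCommGroup H] [InnerProductSpace ℝ H]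
    (N : ℕ) (φ : Module.Basis (Fin N) ℝ H)
    (m M : ℝ) (hm : 0 < m) (hmM : m ≤ M)
    (hequiv : ∀ x : Fin N → ℝ,
      m * ∑ i, x i ^ 2 ≤ ‖∑ i, x i • φ i‖ ^ 2 ∧
        ‖∑ i, x i • φ i‖ ^ 2 ≤ M * ∑ i, x i ^ 2)
    (B : LinearMap.BilinForm ℝ H) (hBsym : ∀ v w : H, B v w = B w v)
    (c C : ℝ) (hc : 0 < c) (hcC : c ≤ C)
    (hB : ∀ v : H, c * ‖v‖ ^ 2 ≤ B v v ∧ B v v ≤ C * ‖v‖ ^ 2)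
    (S : Matrix (Fin N) (Fin N) ℝ)
    (hS : ∀ x y : Fin N → ℝ,
      S.mulVec x ⬝ᵥ y = B (∑ i, x i • φ i) (∑ i, y i • φ i))
    (lmax lmin : ℝ)
    (hmax : Module.End.HasEigenvalue (Matrix.toLin' S) lmax)
    (hmax' : ∀ μ : ℝ, Module.End.HasEigenvalue (Matrix.toLin' S) μ → μ ≤ lmax)
    (hmin : Module.End.HasEigenvalue (Matrix.toLin' S) lmin)
    (hmin' : ∀ μ : ℝ, Module.End.HasEigenvalue (Matrix.toLin' S) μ → lmin ≤ μ) :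
    S.IsSymm ∧ (∀ x : Fin N → ℝ, x ≠ 0 → 0 < S.mulVec x ⬝ᵥ x) ∧
      lmax / lmin ≤ (C * M) / (c * m) :=
  stmt_11_general N φ m M hm hmM hequiv B hBsym c C hc hcC hB S hS lmax lmin hmax hmin
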